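/- arXiv:2604.13221 — 2 statements merged into one kernel-verified Lean document; each statement's English description precedes it below -/
import Mathlib

section
/- Let n ≥ 3 be an integer. The function x ↦ ((x − 1)^n + (−1)^n·(x − 1))/x^n is strictly increasing on the open interval ((1 + √41)/2, ∞). -/
/-- For `n ≥ 3`, the function `x ↦ ((x-1)^n + (-1)^n (x-1))/x^n` is strictly
increasing on `((1 + √41)/2, ∞)`. -/
theorem stmt7 (n : ℕ) (hn : 3 ≤ n) :
    StrictMonoOn (fun x : ℝ => ((x - 1) ^ n + (-1) ^ n * (x - 1)) / x ^ n)
      (Set.Ioi ((1 + Real.sqrt 41) / 2)) := by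
  have hs : (3:ℝ) < Real.sqrt 41 := by
    nlinarith [Real.sq_sqrt (by norm_num : (0:ℝ) ≤ 41), Real.sqrt_nonneg 41]
  have ha : (2:ℝ) < (1 + Real.sqrt 41) / 2 := by linarith
  have hn3 : (3:ℝ) ≤ (n:ℝ) := by exact_mod_cast hn
  apply strictMonoOn_of_deriv_pos (convex_Ioi _)
  · apply ContinuousOn.div
    · fun_prop
    · fun_prop
    · intro x hx
      have hx2 : 2 < x := lt_trans ha hx
      exact pow_ne_zero n (by linarith)
  · intro x hx
    rw [interior_Ioi] at hx
    have hx2 : (2:ℝ) < x := lt_trans ha hx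
    have hx0 : (0:ℝ) < x := by linarith
    have hx1 : (0:ℝ) < x - 1 := by linarith
    have hd : HasDerivAt (fun x : ℝ => ((x - 1) ^ n + (-1) ^ n * (x - 1)) / x ^ n)
        ((((n:ℝ) * (x-1)^(n-1) * 1 + (-1)^n * 1) * x ^ n -
          ((x - 1) ^ n + (-1) ^ n * (x - 1)) * ((n:ℝ) * x ^ (n-1) * 1)) / (x ^ n) ^ 2) x := by
      apply HasDerivAt.div
      · exact (((hasDerivAt_id x).sub_const 1).pow n).add
          (((hasDerivAt_id x).sub_const 1).const_mul ((-1:ℝ)^n))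
          |>.congr_deriv (by simp)
      · exact ((hasDerivAt_id x).pow n)
      · exact pow_ne_zero n (by linarith)
    rw [hd.deriv]
    have hxn : x ^ n = x ^ (n-1) * x := by
      rw [← pow_succ]; congr 1; omega
    have hyn : (x-1) ^ n = (x-1) ^ (n-1) * (x-1) := by
      rw [← pow_succ]; congr 1; omega
    have hkey : (0:ℝ) < (n:ℝ) * (x-1)^(n-1) + (-1)^n * ((n:ℝ) - ((n:ℝ)-1) * x) := by
      have hp : (x - 1) ≤ (x-1)^(n-1) := le_self_pow₀ (by linarith) (by omega)
      have hpn : (n:ℝ) * (x-1) ≤ (n:ℝ) * (x-1)^(n-1) :=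
        mul_le_mul_of_nonneg_left hp (by linarith)
      rcases Nat.even_or_odd n with he | ho
      · rw [he.neg_one_pow]; nlinarith
      · rw [ho.neg_one_pow]; nlinarith [pow_pos hx1 (n-1)]
    have hnum : (((n:ℝ) * (x-1)^(n-1) * 1 + (-1)^n * 1) * x ^ n -
          ((x - 1) ^ n + (-1) ^ n * (x - 1)) * ((n:ℝ) * x ^ (n-1) * 1)) =
        x ^ (n-1) * ((n:ℝ) * (x-1)^(n-1) + (-1)^n * ((n:ℝ) - ((n:ℝ)-1) * x)) := by
      rw [hxn, hyn]; ring
    rw [hnum]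
    positivity
end

section
/- Let k ≥ 2 be an integer, let R > 0 be real, and let x < 0 be a real number with |x| ≥ R/sin(π/(2k)). Then for every complex number z with |z| ≤ R, the real part of (−1)^{k−1}/(x − z)^k is at most 0. Moreover, for z = 0 the real part of (−1)^{k−1}/x^k is strictly negative. -/
/-!
With `a = -x > 0` and `w = z - x = a + z`, the quantity is `-Re (w ^ k)⁻¹`, whose sign is that of
`-Re (w ^ k)`. The disc `‖w - a‖ ≤ a sin θ`, `θ = π / (2k)`, is seen from the origin under the
half-angle `θ`, so `|arg w| ≤ θ`, hence `|k arg w| ≤ π / 2` and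
`Re (w ^ k) = ‖w‖ ^ k cos (k arg w) ≥ 0`.
-/

open Real

namespace Complex

theorem abs_im_mul_cos_le_re_mul_sin {a θ : ℝ} {w : ℂ} (h : ‖w - a‖ ≤ a * Real.sin θ) :
    |w.im| * Real.cos θ ≤ w.re * Real.sin θ := by
  set z := w - a
  have hre : w.re = a + z.re := by simp [z]
  have him : w.im = z.im := by simp [z]
  -- Cauchy–Schwarz against the unit vector `(cos θ, -sin θ)`
  have hCS : |z.im| * Real.cos θ - z.re * Real.sin θ ≤ ‖z‖ := by
    have hlagrange : (|z.im| * Real.cos θ - z.re * Real.sin θ) ^ 2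
        + (|z.im| * Real.sin θ + z.re * Real.cos θ) ^ 2 = z.re * z.re + z.im * z.im := by
      linear_combination (|z.im| ^ 2 + z.re ^ 2) * Real.sin_sq_add_cos_sq θ + sq_abs z.im
    refine le_of_sq_le_sq ?_ (norm_nonneg z)
    rw [Complex.sq_norm, normSq_apply, ← hlagrange]
    nlinarith
  rw [hre, him]
  linarith

theorem abs_arg_le_of_abs_im_mul_cos_le {θ : ℝ} (hθ : 0 < θ) {w : ℂ}
    (h : |w.im| * Real.cos θ ≤ w.re * Real.sin θ) : |arg w| ≤ θ := by
  by_contra! hlt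
  have hsin : 0 < Real.sin (|arg w| - θ) := sin_pos_of_pos_of_lt_pi (by linarith)
    (by linarith [abs_arg_le_pi w])
  have hw : 0 < ‖w‖ := norm_pos_iff.2 fun hw => by simp [hw] at hlt; linarith
  rw [← norm_mul_sin_arg, ← norm_mul_cos_arg, abs_mul, abs_norm,
    abs_sin_eq_sin_abs_of_abs_le_pi (abs_arg_le_pi w), ← Real.cos_abs (arg w)] at h
  rw [Real.sin_sub] at hsin
  nlinarith [mul_pos hw hsin]

theorem re_pow_nonneg_of_mul_abs_arg_le {w : ℂ} {k : ℕ} (h : k * |arg w| ≤ π / 2) :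
    0 ≤ (w ^ k).re := by
  have hpolar : w ^ k = (‖w‖ ^ k : ℝ) * exp ((k * arg w : ℝ) * I) := by
    conv_lhs => rw [← norm_mul_exp_arg_mul_I w]
    push_cast
    rw [mul_pow, ← exp_nat_mul]
    ring_nf
  rw [hpolar, re_ofReal_mul, exp_ofReal_mul_I_re]
  obtain ⟨hlo, hhi⟩ := abs_le.1 (show |k * arg w| ≤ π / 2 by rwa [abs_mul, Nat.abs_cast])
  exact mul_nonneg (by positivity) (cos_nonneg_of_neg_pi_div_two_le_of_le hlo hhi)

end Complex

theorem neg_one_pow_pred_div_sub_pow {K : Type*} [Field K] {k : ℕ} (hk : k ≠ 0) (x z : K) :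
    (-1) ^ (k - 1) / (x - z) ^ k = -((z - x) ^ k)⁻¹ := by
  obtain ⟨n, rfl⟩ := Nat.exists_eq_succ_of_ne_zero hk
  rw [← neg_sub z x, neg_pow (z - x), Nat.succ_sub_one, pow_succ, div_mul_eq_div_div,
    div_mul_eq_div_div, div_self (pow_ne_zero _ (neg_ne_zero.2 one_ne_zero))]
  ring

theorem stmt10_general (k : ℕ) (hk : 2 ≤ k) (R : ℝ) (x : ℝ) (hx : x < 0)
    (hxR : R / Real.sin (Real.pi / (2 * k)) ≤ |x|) :
    (∀ z : ℂ, ‖z‖ ≤ R →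
      (((-1 : ℂ) ^ (k - 1)) / ((x : ℂ) - z) ^ k).re ≤ 0) ∧
    (((-1 : ℂ) ^ (k - 1) / (x : ℂ) ^ k).re < 0) := by
  set θ := π / (2 * k)
  have hk0 : k ≠ 0 := by omega
  have hθ : 0 < θ := by positivity
  have hkθ : k * θ = π / 2 := by simp only [θ]; field_simp
  have hsin : 0 < Real.sin θ :=
    sin_pos_of_pos_of_lt_pi hθ (div_lt_self pi_pos (by norm_cast; omega))
  refine ⟨fun z hz => ?_, ?_⟩
  · have hdisk : ‖(z - x) - ((-x : ℝ) : ℂ)‖ ≤ -x * Real.sin θ := by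
      rw [div_le_iff₀ hsin, abs_of_neg hx] at hxR
      simpa using hz.trans hxR
    have harg := Complex.abs_arg_le_of_abs_im_mul_cos_le hθ
      (Complex.abs_im_mul_cos_le_re_mul_sin hdisk)
    have hre := Complex.re_pow_nonneg_of_mul_abs_arg_le (k := k) <| by
      rw [← hkθ]; gcongr
    rw [neg_one_pow_pred_div_sub_pow hk0, Complex.neg_re, Right.neg_nonpos_iff, Complex.inv_re]
    exact div_nonneg hre (Complex.normSq_nonneg _)
  · rw [← sub_zero (x : ℂ), neg_one_pow_pred_div_sub_pow hk0, zero_sub, ← Complex.ofReal_neg,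
      ← Complex.ofReal_pow, ← Complex.ofReal_inv, ← Complex.ofReal_neg, Complex.ofReal_re]
    exact neg_neg_of_pos (inv_pos.2 (pow_pos (neg_pos.2 hx) k))

/-- For `k ≥ 2`, `R > 0` and a negative real `x` with `|x| ≥ R·csc(π/(2k))`,
the real part of `(-1)^(k-1)/(x - z)^k` is nonpositive for every `z` with `|z| ≤ R`,
and strictly negative for `z = 0`. -/
theorem stmt10 (k : ℕ) (hk : 2 ≤ k) (R : ℝ) (hR : 0 < R) (x : ℝ) (hx : x < 0)
    (hxR : R / Real.sin (Real.pi / (2 * k)) ≤ |x|) :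
    (∀ z : ℂ, ‖z‖ ≤ R →
      (((-1 : ℂ) ^ (k - 1)) / ((x : ℂ) - z) ^ k).re ≤ 0) ∧
    (((-1 : ℂ) ^ (k - 1) / (x : ℂ) ^ k).re < 0) :=
  stmt10_general k hk R x hx hxR
end
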